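/- arXiv:2212.14239 — 2 statements merged into one kernel-verified Lean document; each statement's English description precedes it below -/
import Mathlib

section
/- The semigroup B(X,P) is unit-regular (every f in B(X,P) admits a unit u of B(X,P) with fuf = f) if and only if (i) P is a uniform partition, i.e. all blocks X_i have the same cardinality, and (ii) every block X_i of P is finite. -/
open Cardinal

/-- `P : I → Set X` is a partition of `X`: blocks are nonempty, pairwise disjoint,
and cover `X`. -/
def IsPartition {X I : Type*} (P : I → Set X) : Prop :=
  (∀ i, (P i).Nonempty) ∧ Pairwise (Function.onFun Disjoint P) ∧ ∀ x, ∃ i, x ∈ P i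

/-- `f` belongs to `B(X,P)` with character `χ`: `f` maps each block `P i` into the
block `P (χ i)`, and `χ` is a bijection of the index set. -/
def MemB {X I : Type*} (P : I → Set X) (f : X → X) (χ : I → I) : Prop :=
  (∀ i, Set.MapsTo f (P i) (P (χ i))) ∧ Function.Bijective χ

/-- `u` is a unit of the monoid `B(X,P)`: it lies in `B(X,P)` and has a two-sided
inverse lying in `B(X,P)`. -/
def IsUnitB {X I : Type*} (P : I → Set X) (u : X → X) : Prop :=
  ∃ χu, MemB P u χu ∧ ∃ v χv, MemB P v χv ∧ (∀ x, v (u x) = x) ∧ (∀ x, u (v x) = x)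

/-! A unit of `B(X,P)` maps every block bijectively onto a block. If `f u f = f` with `u` a unit,
then `u` maps the block `X_{χ_f(i)}` into `X_i`, so these two blocks have the same cardinality;
taking for `χ_f` the transposition of `i` and `j` gives uniformity. If a block is infinite, an
injective non-surjective self-map of it, extended by the identity, is an injective `f` in `B(X,P)`,
and `f u f = f` with `u` injective would force `f` to be surjective. Conversely, when all blocks are
finite of the same size, a bijection `X_{χ_f(k)} → X_k` inverting `f` on `f(X_k)` exists for every
`k`, and these bijections glue to a unit `u` with `f u f = f`. -/

open Function Set

open Classical in
noncomputable def extendById {X : Type*} (s : Set X) (g : s → s) : X → X :=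
  fun x => if h : x ∈ s then g ⟨x, h⟩ else x

theorem extendById_injective {X : Type*} {s : Set X} {g : s → s} (hg : Injective g) :
    Injective (extendById s g) := by
  intro a b hab
  unfold extendById at hab
  split_ifs at hab with ha hb hb
  · exact congrArg Subtype.val (hg (Subtype.ext hab))
  · exact absurd (hab ▸ (g ⟨a, ha⟩).2) hb
  · exact absurd (hab ▸ (g ⟨b, hb⟩).2) ha
  · exact hab

theorem surjective_of_extendById_surjective {X : Type*} {s : Set X} {g : s → s}
    (h : Surjective (extendById s g)) : Surjective g := by
  intro y
  obtain ⟨x, hx⟩ := h y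
  unfold extendById at hx
  split_ifs at hx with hxs
  · exact ⟨⟨x, hxs⟩, Subtype.ext hx⟩
  · exact absurd (hx ▸ y.2) hxs

theorem Function.surjective_of_injective_of_comp_comp_eq {α : Type*} {f u : α → α}
    (hf : Injective f) (hu : Injective u) (h : ∀ x, f (u (f x)) = f x) : Surjective f :=
  LeftInverse.surjective <| LeftInverse.rightInverse_of_injective (fun x => hf (h x)) hu

theorem Infinite.exists_injective_not_surjective (α : Type*) [Infinite α] :
    ∃ g : α → α, Injective g ∧ ¬Surjective g := by
  obtain ⟨e⟩ : Nonempty (Option α ≃ α) := Cardinal.eq.mp <| by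
    rw [Cardinal.mk_option, Cardinal.add_one_eq (Cardinal.aleph0_le_mk α)]
  refine ⟨e ∘ some, e.injective.comp (Option.some_injective α), fun hsurj => ?_⟩
  obtain ⟨a, ha⟩ := hsurj (e none)
  exact Option.some_ne_none a (e.injective ha)

theorem Finite.exists_equiv_rightInvOn_range {α β : Type*} [Finite α] [Finite β]
    (h : Nat.card α = Nat.card β) (g : β → α) : ∃ e : α ≃ β, RightInvOn e g (range g) := by
  rcases isEmpty_or_nonempty β with hβ | hβ
  · obtain ⟨e⟩ := Finite.card_eq.mp h
    exact ⟨e, fun a ⟨b, _⟩ => isEmptyElim b⟩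
  have : Fintype α := Fintype.ofFinite α
  have : Fintype β := Fintype.ofFinite β
  have hcard : Fintype.card α = (Finset.univ : Finset β).card := by
    rw [Finset.card_univ, ← Nat.card_eq_fintype_card, h, Nat.card_eq_fintype_card]
  have hinj : InjOn (invFun g) (range g) := fun a ha a' ha' haa' => by
    rw [← invFun_eq ha, ← invFun_eq ha', haa']
  obtain ⟨e, he⟩ :=
    MapsTo.exists_equiv_extend_of_card_eq hcard (fun _ _ => Finset.mem_coe.2 (Finset.mem_univ _))
      hinj
  refine ⟨e.trans (Equiv.subtypeUnivEquiv Finset.mem_univ), fun a ha => ?_⟩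
  simp only [Equiv.trans_apply, Equiv.subtypeUnivEquiv_apply, he a ha]
  exact invFun_eq ha

theorem IsUnitB.injective {X I : Type*} {P : I → Set X} {u : X → X} (hu : IsUnitB P u) :
    Injective u := by
  obtain ⟨-, -, v, -, -, hvu, -⟩ := hu
  exact LeftInverse.injective hvu

theorem IsUnitB.of_equiv {X I : Type*} {P : I → Set X} (U : X ≃ X) (τ : I ≃ I)
    (h : ∀ k, MapsTo U (P (τ k)) (P k)) (h' : ∀ k, MapsTo U.symm (P k) (P (τ k))) :
    IsUnitB P U := by
  refine ⟨τ.symm, ⟨fun j => ?_, τ.symm.bijective⟩, U.symm, τ, ⟨h', τ.bijective⟩,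
    U.symm_apply_apply, U.apply_symm_apply⟩
  simpa using h (τ.symm j)

namespace IsPartition

variable {X I : Type*} {P : I → Set X}

theorem eq_of_mem (hP : IsPartition P) {x : X} {i j : I} (hi : x ∈ P i) (hj : x ∈ P j) :
    i = j :=
  by_contra fun hij => disjoint_left.mp (hP.2.1 hij) hi hj

theorem existsUnique_mem (hP : IsPartition P) (x : X) : ∃! i, x ∈ P i :=
  (hP.2.2 x).elim fun i hi => ⟨i, hi, fun _ hj => hP.eq_of_mem hj hi⟩

theorem exists_memB (hP : IsPartition P) {σ : I → I} (hσ : Bijective σ) : ∃ f, MemB P f σ := by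
  choose pt hpt using hP.1
  choose idx hidx using hP.2.2
  exact ⟨fun x => pt (σ (idx x)), fun i x hx => hP.eq_of_mem (hidx x) hx ▸ hpt _, hσ⟩

theorem exists_equiv_of_blockEquiv (hP : IsPartition P) (τ : I ≃ I)
    (e : ∀ k, P (τ k) ≃ P k) : ∃ U : X ≃ X, ∀ k y (hy : y ∈ P (τ k)), U y = e k ⟨y, hy⟩ := by
  let E := sigmaEquiv P hP.existsUnique_mem
  let W := Equiv.sigmaCongr (β₁ := fun i => P i) (β₂ := fun i => P i) τ fun k => (e k).symm
  refine ⟨E.symm.trans (W.symm.trans E), fun k y hy => ?_⟩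
  have hE : E.symm y = ⟨τ k, y, hy⟩ := E.symm_apply_eq.mpr rfl
  have hW : W.symm ⟨τ k, y, hy⟩ = ⟨k, e k ⟨y, hy⟩⟩ :=
    W.symm_apply_eq.mpr (by simp [W, Equiv.sigmaCongr])
  simp only [Equiv.trans_apply, hE, hW]
  rfl

theorem memB_extendById (hP : IsPartition P) {i : I} (g : P i → P i) :
    MemB P (extendById (P i) g) id := by
  refine ⟨fun k x hx => ?_, bijective_id⟩
  unfold extendById
  split_ifs with hxi
  · exact hP.eq_of_mem hxi hx ▸ (g _).2
  · exact hx

theorem mk_eq_of_mapsTo_of_isUnitB (hP : IsPartition P) {u : X → X} (hu : IsUnitB P u)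
    {i j : I} (h : MapsTo u (P i) (P j)) : #(P i) = #(P j) := by
  obtain ⟨-, -, v, χv, ⟨hv, -⟩, hvu, huv⟩ := hu
  obtain ⟨x, hx⟩ := hP.1 i
  have hχv : χv j = i := hP.eq_of_mem (hv j (h hx)) (by rwa [hvu])
  have h' : MapsTo v (P j) (P i) := hχv ▸ hv j
  exact le_antisymm
    (Cardinal.mk_le_of_injective (h.restrict_inj.2 (LeftInverse.injective hvu).injOn))
    (Cardinal.mk_le_of_injective (h'.restrict_inj.2 (LeftInverse.injective huv).injOn))

theorem mk_char_eq_of_isUnitB (hP : IsPartition P) {f u : X → X} {χ : I → I} (hf : MemB P f χ)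
    (hu : IsUnitB P u) (hfuf : ∀ x, f (u (f x)) = f x) (i : I) : #(P (χ i)) = #(P i) := by
  obtain ⟨χu, ⟨hu_maps, -⟩, -⟩ := id hu
  obtain ⟨x, hx⟩ := hP.1 i
  have hfx := hf.1 i hx
  have hχu : χu (χ i) = i :=
    hf.2.1 (hP.eq_of_mem (hf.1 _ (hu_maps _ hfx)) (by rwa [hfuf]))
  have h : MapsTo u (P (χ i)) (P i) := by simpa only [hχu] using hu_maps (χ i)
  exact hP.mk_eq_of_mapsTo_of_isUnitB hu h

theorem finite_of_unitRegular (hP : IsPartition P)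
    (hreg : ∀ f χf, MemB P f χf → ∃ u, IsUnitB P u ∧ ∀ x, f (u (f x)) = f x) (i : I) :
    (P i).Finite := by
  by_contra hinf
  have : Infinite (P i) := infinite_coe_iff.mpr hinf
  obtain ⟨g, hg_inj, hg_nsurj⟩ := Infinite.exists_injective_not_surjective (P i)
  obtain ⟨u, hu, hfuf⟩ := hreg _ _ (hP.memB_extendById g)
  exact hg_nsurj <| surjective_of_extendById_surjective <|
    surjective_of_injective_of_comp_comp_eq (extendById_injective hg_inj) hu.injective hfuf

theorem exists_isUnitB_of_uniform_of_finite (hP : IsPartition P) (huni : ∀ i j, #(P i) = #(P j))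
    (hfin : ∀ i, (P i).Finite) {f : X → X} {χ : I → I} (hf : MemB P f χ) :
    ∃ u, IsUnitB P u ∧ ∀ x, f (u (f x)) = f x := by
  let σ := Equiv.ofBijective χ hf.2
  have hblock : ∀ k, ∃ e : P (σ k) ≃ P k,
      RightInvOn e ((hf.1 k).restrict f _ _) (range ((hf.1 k).restrict f _ _)) := fun k =>
    have := (hfin k).to_subtype
    have := (hfin (σ k)).to_subtype
    Finite.exists_equiv_rightInvOn_range (congrArg Cardinal.toNat (huni _ _)) _
  choose e he using hblock
  obtain ⟨U, hU⟩ := hP.exists_equiv_of_blockEquiv σ e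
  have hU' : ∀ k y (hy : y ∈ P k), U.symm y = (e k).symm ⟨y, hy⟩ := fun k y hy =>
    U.symm_apply_eq.mpr (by rw [hU k _ ((e k).symm ⟨y, hy⟩).2]; simp)
  refine ⟨U, IsUnitB.of_equiv U σ (fun k y hy => ?_) (fun k y hy => ?_), fun x => ?_⟩
  · simpa only [hU k y hy] using (e k ⟨y, hy⟩).2
  · simpa only [hU' k y hy] using ((e k).symm ⟨y, hy⟩).2
  · obtain ⟨k, hx⟩ := hP.2.2 x
    rw [hU k _ (hf.1 k hx)]
    exact congrArg Subtype.val (he k ⟨⟨x, hx⟩, rfl⟩)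

end IsPartition

theorem B_unit_regular_iff_general {X I : Type*} (P : I → Set X)
    (hP : IsPartition P) :
    (∀ f χf, MemB P f χf → ∃ u, IsUnitB P u ∧ ∀ x, f (u (f x)) = f x) ↔
      (∀ i j : I, Cardinal.mk ↥(P i) = Cardinal.mk ↥(P j)) ∧ ∀ i, (P i).Finite := by
  classical
  refine ⟨fun hreg => ⟨fun i j => ?_, hP.finite_of_unitRegular hreg⟩,
    fun ⟨huni, hfin⟩ _ _ hf => hP.exists_isUnitB_of_uniform_of_finite huni hfin hf⟩
  obtain ⟨f, hf⟩ := hP.exists_memB (Equiv.swap i j).bijective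
  obtain ⟨u, hu, hfuf⟩ := hreg f _ hf
  simpa using (hP.mk_char_eq_of_isUnitB hf hu hfuf i).symm

/-- `B(X,P)` is unit-regular iff `P` is uniform and every block of `P` is finite. -/
theorem B_unit_regular_iff {X I : Type*} [Nonempty X] (P : I → Set X)
    (hP : IsPartition P) :
    (∀ f χf, MemB P f χf → ∃ u, IsUnitB P u ∧ ∀ x, f (u (f x)) = f x) ↔
      (∀ i j : I, Cardinal.mk ↥(P i) = Cardinal.mk ↥(P j)) ∧ ∀ i, (P i).Finite :=
  B_unit_regular_iff_general P hP
end

section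
/- If the index set I is finite (equivalently, the partition P is finite), then Green's relations D and J coincide on B(X,P): for all f, g in B(X,P), f D g if and only if f J g. -/
/-!
If `f J g` in `B(X,P)`, say `f = h₁ g h₂` and `g = h₃ f h₄`, then `|f(X_i)| ≤ |g(X_{χ₁ i})|` and
`|g(X_j)| ≤ |f(X_{χ₃ j})|`. Since `I` is finite, the permutation `χ₃ ∘ χ₁` has finite order, so
going once around each of its cycles forces all these inequalities to be equalities. Choosing
bijections `g(X_{χ₁ i}) ≃ f(X_i)` and gluing them blockwise gives `φ ∈ B(X,P)`; then `k = gφ`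
has the "kernel" of `g` and the "image" of `f`, i.e. `f L k R g`.
-/

open Cardinal

/-- Green's `L` relation on `B(X,P)` (left-to-right composition: `f = hg` means
`f x = g (h x)`). -/
def GreenL {X I : Type*} (P : I → Set X) (f g : X → X) : Prop :=
  ∃ h χh h' χh', MemB P h χh ∧ MemB P h' χh' ∧
    (∀ x, f x = g (h x)) ∧ (∀ x, g x = f (h' x))

/-- Green's `R` relation on `B(X,P)` (`f = gh` means `f x = h (g x)`). -/
def GreenR {X I : Type*} (P : I → Set X) (f g : X → X) : Prop :=
  ∃ h χh h' χh', MemB P h χh ∧ MemB P h' χh' ∧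
    (∀ x, f x = h (g x)) ∧ (∀ x, g x = h' (f x))

/-- Green's `D` relation on `B(X,P)`. -/
def GreenD {X I : Type*} (P : I → Set X) (f g : X → X) : Prop :=
  ∃ k χk, MemB P k χk ∧ GreenL P f k ∧ GreenR P k g

/-- Green's `J` relation on `B(X,P)` (`f = h₁ g h₂` means `f x = h₂ (g (h₁ x))`). -/
def GreenJ {X I : Type*} (P : I → Set X) (f g : X → X) : Prop :=
  (∃ h1 χ1 h2 χ2, MemB P h1 χ1 ∧ MemB P h2 χ2 ∧ ∀ x, f x = h2 (g (h1 x))) ∧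
  (∃ h3 χ3 h4 χ4, MemB P h3 χ3 ∧ MemB P h4 χ4 ∧ ∀ x, g x = h4 (f (h3 x)))

section Partition

variable {X I : Type*} {P : I → Set X}

theorem IsPartition.eq_of_mem_s10 (hP : IsPartition P) {x : X} {i j : I}
    (hi : x ∈ P i) (hj : x ∈ P j) : i = j := by
  by_contra h
  exact Set.disjoint_left.mp (hP.2.1 h) hi hj

theorem IsPartition.exists_mapsTo_of_exists (hP : IsPartition P) (τ : I → I)
    {Q : X → X → Prop} (hQ : ∀ i, ∀ x ∈ P i, ∃ y ∈ P (τ i), Q x y) :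
    ∃ h : X → X, (∀ i, Set.MapsTo h (P i) (P (τ i))) ∧ ∀ x, Q x (h x) := by
  have : ∀ x, ∃ y, (∀ i, x ∈ P i → y ∈ P (τ i)) ∧ Q x y := by
    intro x
    obtain ⟨i, hi⟩ := hP.2.2 x
    obtain ⟨y, hy, hxy⟩ := hQ i x hi
    exact ⟨y, fun j hj => hP.eq_of_mem_s10 hi hj ▸ hy, hxy⟩
  choose h hmaps hQh using this
  exact ⟨h, fun i x hx => hmaps x i hx, hQh⟩

theorem IsPartition.exists_memB_extend (hP : IsPartition P) {S T : I → Set X} {α β : I ≃ I}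
    (hS : ∀ i, S i ⊆ P (α i)) (hT : ∀ i, T i ⊆ P (β i)) (e : ∀ i, S i ≃ T i) :
    ∃ φ, MemB P φ (β ∘ α.symm) ∧ ∀ i x (hx : x ∈ S i), φ x = e i ⟨x, hx⟩ := by
  have hidx : ∀ {i j x}, x ∈ S i → x ∈ P (α j) → i = j :=
    fun hi hj => α.injective (hP.eq_of_mem_s10 (hS _ hi) hj)
  obtain ⟨φ, hφ, hφe⟩ := hP.exists_mapsTo_of_exists (Q := fun x y => ∀ i (hx : x ∈ S i),
      y = e i ⟨x, hx⟩) (β ∘ α.symm) <| by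
    intro j x hx
    rw [← α.apply_symm_apply j] at hx
    by_cases hxS : x ∈ S (α.symm j)
    · refine ⟨e _ ⟨x, hxS⟩, hT _ (e _ ⟨x, hxS⟩).2, fun i hxi => ?_⟩
      obtain rfl := hidx hxi hx
      rfl
    · obtain ⟨y, hy⟩ := hP.1 (β (α.symm j))
      exact ⟨y, hy, fun i hxi => absurd (hidx hxi hx ▸ hxi) hxS⟩
  exact ⟨φ, ⟨hφ, β.bijective.comp α.symm.bijective⟩, fun i x hx => hφe x i hx⟩

end Partition

theorem MemB.comp {X I : Type*} {P : I → Set X} {f g : X → X} {χf χg : I → I}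
    (hg : MemB P g χg) (hf : MemB P f χf) : MemB P (g ∘ f) (χg ∘ χf) :=
  ⟨fun i => (hg.1 _).comp (hf.1 i), hg.2.comp hf.2⟩

theorem Equiv.Perm.apply_eq_of_forall_le_apply {I α : Type*} [Finite I] [PartialOrder α]
    (e : Equiv.Perm I) {a : I → α} (h : ∀ i, a i ≤ a (e i)) (i : I) : a (e i) = a i := by
  have mono : ∀ n i, a i ≤ a ((e ^ n) i) := by
    intro n
    induction n with
    | zero => exact fun i => le_rfl
    | succ n ih =>
      intro i
      rw [pow_succ, Equiv.Perm.mul_apply]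
      exact (h i).trans (ih (e i))
  have hpos := (isOfFinOrder_of_finite e).orderOf_pos
  refine le_antisymm ?_ (h i)
  calc a (e i) ≤ a ((e ^ (orderOf e - 1)) (e i)) := mono _ _
    _ = a i := by
      rw [← Equiv.Perm.mul_apply, ← pow_succ, Nat.sub_add_cancel hpos, pow_orderOf_eq_one,
        Equiv.Perm.one_apply]

theorem mk_image_le_of_eq_comp {α β γ : Type*} {f : α → γ} {g : β → γ} {h₁ : α → β}
    {h₂ : γ → γ} {s : Set α} {t : Set β}
    (hfg : ∀ x, f x = h₂ (g (h₁ x))) (h₁st : Set.MapsTo h₁ s t) : #(f '' s) ≤ #(g '' t) := by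
  have hsub : f '' s ⊆ h₂ '' (g '' t) := by
    rintro _ ⟨x, hx, rfl⟩
    exact ⟨g (h₁ x), ⟨h₁ x, h₁st hx, rfl⟩, (hfg x).symm⟩
  exact (mk_le_mk_of_subset hsub).trans mk_image_le

section Green

variable {X I : Type*} {P : I → Set X} {f g : X → X}

theorem GreenD.greenJ (h : GreenD P f g) : GreenJ P f g := by
  obtain ⟨k, -, -, ⟨l, χl, l', χl', hl, hl', hfk, hkf⟩, ⟨r, χr, r', χr', hr, hr', hkg, hgk⟩⟩ := h
  exact ⟨⟨l, χl, r, χr, hl, hr, fun x => by rw [hfk, hkg]⟩,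
    ⟨l', χl', r', χr', hl', hr', fun x => by rw [hgk, hkf]⟩⟩

theorem GreenJ.exists_mk_image_eq [Finite I] (h : GreenJ P f g) :
    ∃ σ : I ≃ I, ∀ i, #(f '' P i) = #(g '' P (σ i)) := by
  obtain ⟨⟨h₁, χ₁, h₂, -, H₁, -, hf⟩, ⟨h₃, χ₃, h₄, -, H₃, -, hg⟩⟩ := h
  let σ₁ := Equiv.ofBijective χ₁ H₁.2
  let σ₃ := Equiv.ofBijective χ₃ H₃.2
  have hfg : ∀ i, #(f '' P i) ≤ #(g '' P (σ₁ i)) := fun i => mk_image_le_of_eq_comp hf (H₁.1 i)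
  have hgf : ∀ j, #(g '' P j) ≤ #(f '' P (σ₃ j)) := fun j => mk_image_le_of_eq_comp hg (H₃.1 j)
  have hcycle := Equiv.Perm.apply_eq_of_forall_le_apply (σ₁.trans σ₃) (a := fun i => #(f '' P i))
    fun i => (hfg i).trans (hgf _)
  exact ⟨σ₁, fun i => le_antisymm (hfg i) ((hgf _).trans (hcycle i).le)⟩

theorem greenL_of_image_eq {k : X → X} (hP : IsPartition P) (σ : I ≃ I)
    (h : ∀ i, f '' P i = k '' P (σ i)) : GreenL P f k := by
  obtain ⟨l, hl, hfk⟩ := hP.exists_mapsTo_of_exists (Q := fun x y => f x = k y) σ <| by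
    intro i x hx
    obtain ⟨y, hy, hky⟩ := (h i).le ⟨x, hx, rfl⟩
    exact ⟨y, hy, hky.symm⟩
  obtain ⟨l', hl', hkf⟩ := hP.exists_mapsTo_of_exists (Q := fun x y => k x = f y) σ.symm <| by
    intro j x hx
    rw [← σ.apply_symm_apply j] at hx
    exact (h _).ge ⟨x, hx, rfl⟩ |>.imp fun y ⟨hy, hfy⟩ => ⟨hy, hfy.symm⟩
  exact ⟨l, σ, l', σ.symm, ⟨hl, σ.bijective⟩, ⟨hl', σ.symm.bijective⟩, hfk, hkf⟩

theorem greenD_of_mk_image_eq (hP : IsPartition P) {χf χg : I → I}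
    (hf : MemB P f χf) (hg : MemB P g χg) (σ : I ≃ I)
    (hσ : ∀ i, #(f '' P i) = #(g '' P (σ i))) : GreenD P f g := by
  let α := σ.trans (Equiv.ofBijective χg hg.2)
  let β := Equiv.ofBijective χf hf.2
  have hS : ∀ i, g '' P (σ i) ⊆ P (α i) := fun i => (hg.1 (σ i)).image_subset
  have hT : ∀ i, f '' P i ⊆ P (β i) := fun i => (hf.1 i).image_subset
  let e : ∀ i, g '' P (σ i) ≃ f '' P i := fun i => (Cardinal.eq.mp (hσ i).symm).some
  obtain ⟨φ, hφ, hφe⟩ := hP.exists_memB_extend hS hT e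
  obtain ⟨ψ, hψ, hψe⟩ := hP.exists_memB_extend hT hS fun i => (e i).symm
  have hφS : ∀ i, φ '' (g '' P (σ i)) = f '' P i := by
    intro i
    ext y
    constructor
    · rintro ⟨x, hx, rfl⟩
      exact hφe i x hx ▸ (e i ⟨x, hx⟩).2
    · intro hy
      refine ⟨_, ((e i).symm ⟨y, hy⟩).2, ?_⟩
      rw [hφe i _ ((e i).symm ⟨y, hy⟩).2, Subtype.coe_eta, Equiv.apply_symm_apply]
  have hψφ : ∀ x, ψ (φ (g x)) = g x := by
    intro x
    obtain ⟨j, hj⟩ := hP.2.2 x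
    rw [← σ.apply_symm_apply j] at hj
    have hgx : g x ∈ g '' P (σ (σ.symm j)) := ⟨x, hj, rfl⟩
    rw [hφe _ _ hgx, hψe _ _ (e _ ⟨g x, hgx⟩).2, Subtype.coe_eta, Equiv.symm_apply_apply]
  refine ⟨φ ∘ g, _, hφ.comp hg, greenL_of_image_eq hP σ fun i => ?_,
    φ, _, ψ, _, hφ, hψ, fun x => rfl, fun x => (hψφ x).symm⟩
  rw [Set.image_comp, hφS]

end Green

theorem D_eq_J_of_finite_general {X I : Type*} [Finite I] (P : I → Set X)
    (hP : IsPartition P) (f g : X → X) (χf χg : I → I)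
    (hf : MemB P f χf) (hg : MemB P g χg) :
    GreenD P f g ↔ GreenJ P f g := by
  refine ⟨GreenD.greenJ, fun hJ => ?_⟩
  obtain ⟨σ, hσ⟩ := hJ.exists_mk_image_eq
  exact greenD_of_mk_image_eq hP hf hg σ hσ

/-- If the partition `P` is finite then `D = J` on `B(X,P)`. -/
theorem D_eq_J_of_finite {X I : Type*} [Nonempty X] [Finite I] (P : I → Set X)
    (hP : IsPartition P) (f g : X → X) (χf χg : I → I)
    (hf : MemB P f χf) (hg : MemB P g χg) :
    GreenD P f g ↔ GreenJ P f g :=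
  D_eq_J_of_finite_general P hP f g χf χg hf hg
end
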